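/- arXiv:1410.8663 — 2 statements merged into one kernel-verified Lean document; each statement's English description precedes it below -/
import Mathlib

section
/- For T = ([0,M]×[0,1]×[0,M]×[0,1]) ∪ ([0,1]×[0,M]×[0,1]×[0,M]) ⊆ ℝ⁴ with M ≥ 1: |T_{{1,2}}| ≤ 2M, |T_{{2,3}}| ≤ 2M, |T_{{3,4}}| ≤ 2M, |T_{{1,2,3}}| ≥ M², and |T_{{2,3,4}}| ≥ M². Consequently, for M > 8 the inequality |T_{{1,2}}|·|T_{{2,3}}|·|T_{{3,4}}| ≥ |T_{{1,2,3}}|·|T_{{2,3,4}}| fails. -/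
open MeasureTheory

/-- The `|S|`-dimensional Lebesgue volume of the orthogonal projection of `T ⊆ ℝⁿ`
onto the coordinate subspace indexed by `S`. -/
noncomputable def projVol {n : ℕ} (T : Set (Fin n → ℝ)) (S : Finset (Fin n)) : ℝ :=
  (volume ((fun (x : Fin n → ℝ) (i : S) => x i.1) '' T)).toReal

lemma proj_box {n : ℕ} (a : Fin n → ℝ) (ha : ∀ i, 0 ≤ a i) (S : Finset (Fin n)) :
    (fun (x : Fin n → ℝ) (i : S) => x i.1) '' (Set.pi Set.univ fun i => Set.Icc 0 (a i)) =
      Set.pi Set.univ (fun i : S => Set.Icc 0 (a i.1)) := by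
  ext y
  constructor
  · rintro ⟨x, hx, rfl⟩ i _
    exact hx i.1 (Set.mem_univ _)
  · intro hy
    refine ⟨fun i => if h : i ∈ S then y ⟨i, h⟩ else 0, fun i _ => ?_, ?_⟩
    · by_cases h : i ∈ S
      · simpa [h] using hy ⟨i, h⟩ (Set.mem_univ _)
      · simp [h, ha i, Set.mem_Icc]
    · funext i
      simp [i.2]

lemma vol_box {n : ℕ} (a : Fin n → ℝ) (ha : ∀ i, 0 ≤ a i) (S : Finset (Fin n)) :
    volume (Set.pi Set.univ (fun i : S => Set.Icc 0 (a i.1))) =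
      ENNReal.ofReal (∏ i ∈ S, a i) := by
  rw [volume_pi_pi]
  simp only [Real.volume_Icc, sub_zero]
  rw [Finset.prod_coe_sort S (fun i => ENNReal.ofReal (a i)),
    ENNReal.ofReal_prod_of_nonneg (fun i _ => ha i)]

lemma projVol_union_le {n : ℕ} (a b : Fin n → ℝ) (ha : ∀ i, 0 ≤ a i) (hb : ∀ i, 0 ≤ b i)
    (S : Finset (Fin n)) :
    projVol (Set.pi Set.univ (fun i => Set.Icc 0 (a i)) ∪
      Set.pi Set.univ (fun i => Set.Icc 0 (b i))) S ≤ (∏ i ∈ S, a i) + ∏ i ∈ S, b i := by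
  apply ENNReal.toReal_le_of_le_ofReal
    (add_nonneg (Finset.prod_nonneg fun i _ => ha i) (Finset.prod_nonneg fun i _ => hb i))
  rw [Set.image_union, proj_box a ha, proj_box b hb,
    ENNReal.ofReal_add (Finset.prod_nonneg fun i _ => ha i) (Finset.prod_nonneg fun i _ => hb i)]
  exact (measure_union_le _ _).trans (by rw [vol_box a ha, vol_box b hb])

lemma le_projVol_union_right {n : ℕ} (a b : Fin n → ℝ) (ha : ∀ i, 0 ≤ a i) (hb : ∀ i, 0 ≤ b i)
    (S : Finset (Fin n)) :
    (∏ i ∈ S, b i) ≤ projVol (Set.pi Set.univ (fun i => Set.Icc 0 (a i)) ∪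
      Set.pi Set.univ (fun i => Set.Icc 0 (b i))) S := by
  unfold projVol
  rw [Set.image_union, proj_box a ha, proj_box b hb]
  have hfin : volume (Set.pi Set.univ (fun i : S => Set.Icc 0 (a i.1)) ∪
      Set.pi Set.univ (fun i : S => Set.Icc 0 (b i.1))) ≠ ⊤ :=
    ((measure_union_le _ _).trans_lt (by
      rw [vol_box a ha, vol_box b hb]; exact ENNReal.add_lt_top.2
        ⟨ENNReal.ofReal_lt_top, ENNReal.ofReal_lt_top⟩)).ne
  calc (∏ i ∈ S, b i) = (volume (Set.pi Set.univ (fun i : S => Set.Icc 0 (b i.1)))).toReal := by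
        rw [vol_box b hb, ENNReal.toReal_ofReal (Finset.prod_nonneg fun i _ => hb i)]
    _ ≤ _ := ENNReal.toReal_mono hfin (measure_mono Set.subset_union_right)

lemma le_projVol_union_left {n : ℕ} (a b : Fin n → ℝ) (ha : ∀ i, 0 ≤ a i) (hb : ∀ i, 0 ≤ b i)
    (S : Finset (Fin n)) :
    (∏ i ∈ S, a i) ≤ projVol (Set.pi Set.univ (fun i => Set.Icc 0 (a i)) ∪
      Set.pi Set.univ (fun i => Set.Icc 0 (b i))) S := by
  rw [Set.union_comm]
  exact le_projVol_union_right b a hb ha S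


/-- Bounds for the skeleton counterexample. -/
theorem stmt_6 (M : ℝ) (hM : 1 ≤ M)
    (T : Set (Fin 4 → ℝ))
    (hT : T = Set.pi Set.univ (fun i => Set.Icc 0 (![M, 1, M, 1] i)) ∪
              Set.pi Set.univ (fun i => Set.Icc 0 (![1, M, 1, M] i))) :
    projVol T {0, 1} ≤ 2 * M ∧ projVol T {1, 2} ≤ 2 * M ∧ projVol T {2, 3} ≤ 2 * M ∧
    M ^ 2 ≤ projVol T {0, 1, 2} ∧ M ^ 2 ≤ projVol T {1, 2, 3} ∧
    (8 < M →
      projVol T {0, 1} * projVol T {1, 2} * projVol T {2, 3} <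
        projVol T {0, 1, 2} * projVol T {1, 2, 3}) := by
  have h0 : (0:ℝ) ≤ M := le_trans zero_le_one hM
  have ha : ∀ i, 0 ≤ ![M, 1, M, 1] i := by
    intro i; fin_cases i <;> simp [h0]
  have hb : ∀ i, 0 ≤ ![1, M, 1, M] i := by
    intro i; fin_cases i <;> simp [h0]
  subst hT
  have e1 : projVol ((Set.pi Set.univ fun i => Set.Icc 0 (![M, 1, M, 1] i)) ∪ Set.pi Set.univ fun i => Set.Icc 0 (![1, M, 1, M] i)) ({0,1} : Finset (Fin 4)) ≤ 2 * M := by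
    refine (projVol_union_le _ _ ha hb {0,1}).trans_eq ?_
    rw [Finset.prod_pair (by decide), Finset.prod_pair (by decide)]
    norm_num
    ring
  have e2 : projVol ((Set.pi Set.univ fun i => Set.Icc 0 (![M, 1, M, 1] i)) ∪ Set.pi Set.univ fun i => Set.Icc 0 (![1, M, 1, M] i)) ({1,2} : Finset (Fin 4)) ≤ 2 * M := by
    refine (projVol_union_le _ _ ha hb {1,2}).trans_eq ?_
    rw [Finset.prod_pair (by decide), Finset.prod_pair (by decide)]
    norm_num
    simp [Matrix.cons_val]
    ring
  have e3 : projVol ((Set.pi Set.univ fun i => Set.Icc 0 (![M, 1, M, 1] i)) ∪ Set.pi Set.univ fun i => Set.Icc 0 (![1, M, 1, M] i)) ({2,3} : Finset (Fin 4)) ≤ 2 * M := by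
    refine (projVol_union_le _ _ ha hb {2,3}).trans_eq ?_
    rw [Finset.prod_pair (by decide), Finset.prod_pair (by decide)]
    norm_num
    simp [Matrix.cons_val]
    ring
  have e4 : M ^ 2 ≤ projVol ((Set.pi Set.univ fun i => Set.Icc 0 (![M, 1, M, 1] i)) ∪ Set.pi Set.univ fun i => Set.Icc 0 (![1, M, 1, M] i)) ({0,1,2} : Finset (Fin 4)) := by
    have := le_projVol_union_left _ _ ha hb {0,1,2}
    calc M ^ 2 = ∏ i ∈ ({0,1,2} : Finset (Fin 4)), ![M, 1, M, 1] i := by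
          simp [Finset.prod_insert]; ring
      _ ≤ _ := this
  have e5 : M ^ 2 ≤ projVol ((Set.pi Set.univ fun i => Set.Icc 0 (![M, 1, M, 1] i)) ∪ Set.pi Set.univ fun i => Set.Icc 0 (![1, M, 1, M] i)) ({1,2,3} : Finset (Fin 4)) := by
    have := le_projVol_union_right _ _ ha hb {1,2,3}
    calc M ^ 2 = ∏ i ∈ ({1,2,3} : Finset (Fin 4)), ![1, M, 1, M] i := by
          simp [Finset.prod_insert]; ring
      _ ≤ _ := this
  refine ⟨e1, e2, e3, e4, e5, fun h8 => ?_⟩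
  have hp1 : 0 ≤ projVol ((Set.pi Set.univ fun i => Set.Icc 0 (![M, 1, M, 1] i)) ∪ Set.pi Set.univ fun i => Set.Icc 0 (![1, M, 1, M] i)) ({0,1} : Finset (Fin 4)) := ENNReal.toReal_nonneg
  have hp2 : 0 ≤ projVol ((Set.pi Set.univ fun i => Set.Icc 0 (![M, 1, M, 1] i)) ∪ Set.pi Set.univ fun i => Set.Icc 0 (![1, M, 1, M] i)) ({1,2} : Finset (Fin 4)) := ENNReal.toReal_nonneg
  have hp3 : 0 ≤ projVol ((Set.pi Set.univ fun i => Set.Icc 0 (![M, 1, M, 1] i)) ∪ Set.pi Set.univ fun i => Set.Icc 0 (![1, M, 1, M] i)) ({2,3} : Finset (Fin 4)) := ENNReal.toReal_nonneg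
  have hMpos : (0:ℝ) < M := lt_trans (by norm_num) h8
  have key : projVol ((Set.pi Set.univ fun i => Set.Icc 0 (![M, 1, M, 1] i)) ∪ Set.pi Set.univ fun i => Set.Icc 0 (![1, M, 1, M] i)) ({0,1} : Finset (Fin 4)) * projVol ((Set.pi Set.univ fun i => Set.Icc 0 (![M, 1, M, 1] i)) ∪ Set.pi Set.univ fun i => Set.Icc 0 (![1, M, 1, M] i)) ({1,2} : Finset (Fin 4)) * projVol ((Set.pi Set.univ fun i => Set.Icc 0 (![M, 1, M, 1] i)) ∪ Set.pi Set.univ fun i => Set.Icc 0 (![1, M, 1, M] i)) ({2,3} : Finset (Fin 4)) ≤ 8 * M^3 := by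
    calc projVol ((Set.pi Set.univ fun i => Set.Icc 0 (![M, 1, M, 1] i)) ∪ Set.pi Set.univ fun i => Set.Icc 0 (![1, M, 1, M] i)) ({0,1} : Finset (Fin 4)) * projVol ((Set.pi Set.univ fun i => Set.Icc 0 (![M, 1, M, 1] i)) ∪ Set.pi Set.univ fun i => Set.Icc 0 (![1, M, 1, M] i)) ({1,2} : Finset (Fin 4)) * projVol ((Set.pi Set.univ fun i => Set.Icc 0 (![M, 1, M, 1] i)) ∪ Set.pi Set.univ fun i => Set.Icc 0 (![1, M, 1, M] i)) ({2,3} : Finset (Fin 4))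
        ≤ (2*M) * (2*M) * (2*M) := by
          apply mul_le_mul (mul_le_mul e1 e2 hp2 (by positivity)) e3 hp3 (by positivity)
      _ = 8 * M^3 := by ring
  have key2 : 8 * M^3 < M^2 * M^2 := by nlinarith [mul_lt_mul_of_pos_right h8 (pow_pos hMpos 3)]
  exact key.trans_lt (key2.trans_le (mul_le_mul e4 e5 (by positivity) (le_trans (by positivity) e4)))
end

section
/- Let T ⊆ ℝ₊ⁿ be a finite union of axis-parallel unit cubes with integer corner coordinates, i.e., T = ⋃_{t∈Γ} ∏_i [t_i, t_i+1] for a finite set Γ ⊆ ℤ₊ⁿ. For M larger than all coordinates appearing in Γ plus 1, let T' = ⋃_{r,s∈Γ} ∏_i [M r_i + s_i, M r_i + s_i + 1]. Then for every nonempty S ⊆ [n], |T'_S| = |T_S|². -/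
open MeasureTheory

/-- volume of a union of unit lattice cubes equals the number of cubes -/
lemma vol_cubes {ι : Type*} [Fintype ι] (A : Finset (ι → ℕ)) :
    volume (⋃ a ∈ A, Set.pi Set.univ (fun i => Set.Icc ((a i : ℝ)) (a i + 1))) = A.card := by
  have hone : ∀ a : ι → ℕ,
      volume (Set.pi Set.univ (fun i => Set.Icc ((a i : ℝ)) (a i + 1))) = 1 := by
    intro a
    rw [volume_pi_pi]
    simp [Real.volume_Icc]
  have hone' : ∀ a : ι → ℕ,
      volume (Set.pi Set.univ (fun i => Set.Ico ((a i : ℝ)) (a i + 1))) = 1 := by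
    intro a
    rw [volume_pi_pi]
    simp [Real.volume_Ico]
  apply le_antisymm
  · calc volume (⋃ a ∈ A, Set.pi Set.univ (fun i => Set.Icc ((a i : ℝ)) (a i + 1)))
        ≤ ∑ a ∈ A, volume (Set.pi Set.univ (fun i => Set.Icc ((a i : ℝ)) (a i + 1))) :=
          measure_biUnion_finset_le A _
      _ = A.card := by rw [Finset.sum_congr rfl (fun a _ => hone a)]; simp
  · have hdisj : (A : Set (ι → ℕ)).Pairwise
        (Function.onFun Disjoint (fun a => Set.pi Set.univ (fun i => Set.Ico ((a i : ℝ)) (a i + 1)))) := by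
      intro a _ b _ hab
      have : ∃ i, a i ≠ b i := by
        by_contra h
        push_neg at h
        exact hab (funext h)
      obtain ⟨i, hi⟩ := this
      refine Set.disjoint_left.2 fun x hx hx' => ?_
      have h1 := hx i (Set.mem_univ i)
      have h2 := hx' i (Set.mem_univ i)
      simp only [Set.mem_Ico] at h1 h2
      rcases lt_or_gt_of_ne hi with h | h
      · have : (a i : ℝ) + 1 ≤ b i := by exact_mod_cast h
        linarith [h1.2, h2.1]
      · have : (b i : ℝ) + 1 ≤ a i := by exact_mod_cast h
        linarith [h1.1, h2.2]
    calc (A.card : ENNReal)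
        = ∑ a ∈ A, volume (Set.pi Set.univ (fun i => Set.Ico ((a i : ℝ)) (a i + 1))) := by
          rw [Finset.sum_congr rfl (fun a _ => hone' a)]; simp
      _ = volume (⋃ a ∈ A, Set.pi Set.univ (fun i => Set.Ico ((a i : ℝ)) (a i + 1))) := by
          rw [measure_biUnion_finset hdisj
            (fun a _ => (MeasurableSet.univ_pi (fun i => measurableSet_Ico)))]
      _ ≤ _ := measure_mono (Set.iUnion₂_mono fun a _ =>
          Set.pi_mono fun i _ => Set.Ico_subset_Icc_self)

lemma image_pi_restrict {n : ℕ} (S : Finset (Fin n)) (f : Fin n → Set ℝ)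
    (hf : ∀ i, (f i).Nonempty) :
    (fun (x : Fin n → ℝ) (i : S) => x i.1) '' Set.pi Set.univ f
      = Set.pi Set.univ (fun i : S => f i.1) := by
  ext y
  constructor
  · rintro ⟨x, hx, rfl⟩ i _
    exact hx i.1 (Set.mem_univ _)
  · intro hy
    choose g hg using hf
    refine ⟨fun j => if h : j ∈ S then y ⟨j, h⟩ else g j, fun j _ => ?_, ?_⟩
    · by_cases h : j ∈ S
      · simpa [h] using hy ⟨j, h⟩ (Set.mem_univ _)
      · simp [h, hg j]
    · funext i
      simp [i.2]

/-- The product trick squares all projection volumes of a union of lattice unit cubes. -/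
theorem stmt_19 {n : ℕ} (Γ : Finset (Fin n → ℕ)) (M : ℕ)
    (hM : ∀ t ∈ Γ, ∀ i : Fin n, t i + 1 < M)
    (T T' : Set (Fin n → ℝ))
    (hT : T = ⋃ t ∈ Γ, Set.pi Set.univ (fun i => Set.Icc (t i : ℝ) (t i + 1)))
    (hT' : T' = ⋃ r ∈ Γ, ⋃ s ∈ Γ, Set.pi Set.univ
      (fun i => Set.Icc ((M * r i + s i : ℕ) : ℝ) ((M * r i + s i : ℕ) + 1))) :
    ∀ S : Finset (Fin n), S.Nonempty → projVol T' S = projVol T S ^ 2 := by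
  intro S _
  classical
  set res : (Fin n → ℕ) → (S → ℕ) := fun t i => t i.1 with hres
  set A : Finset (S → ℕ) := Γ.image res with hA
  set B : Finset (S → ℕ) := (A ×ˢ A).image (fun p => fun i => M * p.1 i + p.2 i) with hB
  have hAlt : ∀ b ∈ A, ∀ i : S, b i < M := by
    intro b hb i
    rw [hA, Finset.mem_image] at hb
    obtain ⟨t, ht, rfl⟩ := hb
    have := hM t ht i.1
    simp only [hres]
    omega
  -- projection of T
  have hTproj : (fun (x : Fin n → ℝ) (i : S) => x i.1) '' T
      = ⋃ a ∈ A, Set.pi Set.univ (fun i : S => Set.Icc ((a i : ℝ)) (a i + 1)) := by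
    subst hT
    rw [Set.image_iUnion₂]
    ext y
    simp only [Set.mem_iUnion, hA, Finset.mem_image]
    constructor
    · rintro ⟨t, ht, hy⟩
      refine ⟨res t, ⟨t, ht, rfl⟩, ?_⟩
      rwa [image_pi_restrict S _ (fun i => Set.nonempty_Icc.2 (by linarith))] at hy
    · rintro ⟨a, ⟨t, ht, rfl⟩, hy⟩
      refine ⟨t, ht, ?_⟩
      rwa [image_pi_restrict S _ (fun i => Set.nonempty_Icc.2 (by linarith))]
  -- projection of T'
  have hT'proj : (fun (x : Fin n → ℝ) (i : S) => x i.1) '' T'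
      = ⋃ b ∈ B, Set.pi Set.univ (fun i : S => Set.Icc ((b i : ℝ)) (b i + 1)) := by
    subst hT'
    simp only [Set.image_iUnion₂]
    ext y
    simp only [Set.mem_iUnion, hB, Finset.mem_image, Finset.mem_product]
    constructor
    · rintro ⟨r, hr, s, hs, hy⟩
      refine ⟨(fun i : S => M * res r i + res s i), ⟨(res r, res s),
        ⟨Finset.mem_image_of_mem _ hr, Finset.mem_image_of_mem _ hs⟩, rfl⟩, ?_⟩
      rw [image_pi_restrict S _ (fun i => Set.nonempty_Icc.2 (by linarith))] at hy
      convert hy using 2 with i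
    · rintro ⟨b, ⟨⟨a₁, a₂⟩, ⟨ha₁, ha₂⟩, rfl⟩, hy⟩
      rw [hA, Finset.mem_image] at ha₁ ha₂
      obtain ⟨r, hr, rfl⟩ := ha₁
      obtain ⟨s, hs, rfl⟩ := ha₂
      refine ⟨r, hr, s, hs, ?_⟩
      rw [image_pi_restrict S _ (fun i => Set.nonempty_Icc.2 (by linarith))]
      convert hy using 2 with i
  -- cardinality of B
  have hcardB : B.card = A.card * A.card := by
    rw [hB, Finset.card_image_of_injOn, Finset.card_product]
    rintro ⟨a₁, b₁⟩ hp ⟨a₂, b₂⟩ hq h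
    simp only [Finset.mem_coe, Finset.mem_product] at hp hq
    have key : ∀ i : S, a₁ i = a₂ i ∧ b₁ i = b₂ i := by
      intro i
      have hb₁ := hAlt _ hp.2 i
      have hb₂ := hAlt _ hq.2 i
      have heq : M * a₁ i + b₁ i = M * a₂ i + b₂ i := congrFun h i
      have hM0 : 0 < M := lt_of_le_of_lt (Nat.zero_le _) hb₁
      have hb : b₁ i = b₂ i := by
        have e1 : (M * a₁ i + b₁ i) % M = b₁ i := by
          rw [Nat.mul_add_mod, Nat.mod_eq_of_lt hb₁]
        have e2 : (M * a₂ i + b₂ i) % M = b₂ i := by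
          rw [Nat.mul_add_mod, Nat.mod_eq_of_lt hb₂]
        rw [← e1, ← e2, heq]
      have ha : a₁ i = a₂ i := Nat.eq_of_mul_eq_mul_left hM0 (by omega)
      exact ⟨ha, hb⟩
    exact Prod.ext (funext fun i => (key i).1) (funext fun i => (key i).2)
  have v1 : projVol T S = A.card := by
    unfold projVol
    rw [hTproj, vol_cubes]
    simp
  have v2 : projVol T' S = B.card := by
    unfold projVol
    rw [hT'proj, vol_cubes]
    simp
  rw [v1, v2, hcardB]
  push_cast
  ring
end
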